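/- arXiv:1104.2244 — 2 statements merged into one kernel-verified Lean document; each statement's English description precedes it below -/
import Mathlib

section
/- Let G be a finite group, let Σ̃_G be a transversal of the conjugacy classes of subgroups of G, and set e := Σ_{U ∈ Σ̃_G} [U,id_U,U]⁺_{G×G} ∈ ℚA(G,G). Then e ·_G a = a = a ·_G e for every element a of the subspace ℚA(G,G)^{G×G} of G×G-fixed elements. In particular, the ℤ-span B̃(G,G) of the orbit sums [U,α,V]⁺_{G×G} is a ring (a ℤ-order in the ℚ-algebra ℚA(G,G)^{G×G}) with identity element e. -/
open scoped Classical

/-- The set `E_{G,H}` of triples `(U,α,V)` with `V ≤ H`, `U ≤ G` and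
`α : V → U` a surjective homomorphism, encoded as pairs of a subgroup `V ≤ H`
and a homomorphism `α : ↥V →* G` (so that `U = α.range`). -/
abbrev TriE (G H : Type*) [Group G] [Group H] := (V : Subgroup H) × (↥V →* G)

/-- The graph subgroup `⊲(U,α,V) = {(α v, v) : v ∈ V} ≤ G × H` of a triple.
Triples are `G × H`-conjugate iff their graphs are conjugate. -/
def lhdOf {G H : Type*} [Group G] [Group H] (t : TriE G H) : Subgroup (G × H) :=
  (t.2.prod t.1.subtype).range

/-- The ghost-algebra product `ℚA(G,H) × ℚA(H,K) → ℚA(G,K)`, given on basis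
elements by `(U,α,V)·(V',β,W) = 0` if `V ≠ V'` and by
`(|C_H(V)|/|H|)·(U,α∘β,W)` if `V = V'`; elements of `ℚA` are represented by
their coefficient functions on the basis `TriE`. -/
noncomputable def ghostMul {G H K : Type*} [Group G] [Group H] [Group K]
    (a : TriE G H → ℚ) (b : TriE H K → ℚ) : TriE G K → ℚ :=
  fun r => ∑ᶠ (s : TriE G H), ∑ᶠ (t : TriE H K),
    if h : t.2.range = s.1 then
      (if r = ⟨t.1, s.2.comp (t.2.codRestrict s.1
            (fun w => h ▸ MonoidHom.mem_range.mpr ⟨w, rfl⟩))⟩ then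
        ((Nat.card ↥(Subgroup.centralizer ((s.1 : Subgroup H) : Set H)) : ℚ) /
          (Nat.card H : ℚ)) * a s * b t
      else 0)
    else 0

/-- The orbit sum `[U,α,V]⁺` (sum of the `G × H`-conjugates of the basis
element `(U,α,V)`), as a coefficient function: the indicator function of the
conjugation orbit of the triple `t`, detected via graphs. -/
noncomputable def orbSum {G H : Type*} [Group G] [Group H] (t : TriE G H) :
    TriE G H → ℚ :=
  fun s => if ∃ a : G × H,
    Subgroup.map (MulAut.conj a).toMonoidHom (lhdOf t) = lhdOf s then 1 else 0

/-! The element `e` is the indicator function of the triples `(kVk⁻¹, c_k, V)`. At a triple `r`,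
the nonzero terms of `e · a` (and of `a · e`) are the factorizations of `r` through some `c_k`,
one for each `k ∈ G`; by `G × G`-invariance of `a` each contributes `|C_G(X)|/|G| · a r`, where
`X` is the image (resp. the domain) of `r`, and `k`, `k₀` give the same factorization exactly
when `k₀⁻¹ k ∈ C_G(X)`. Counting each factorization `|C_G(X)|` times, the sum is `a r`. -/

instance {M N : Type*} [MulOneClass M] [MulOneClass N] [Finite M] [Finite N] : Finite (M →* N) :=
  .of_injective _ DFunLike.coe_injective

theorem Subgroup.mem_map_conj_iff {G : Type*} [Group G] {L : Subgroup G} {x p : G} :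
    p ∈ L.map (MulAut.conj x).toMonoidHom ↔ x⁻¹ * p * x ∈ L := by
  rw [Subgroup.mem_map_equiv, MulAut.conj_symm_apply]

theorem Subgroup.centralizer_map_conj {G : Type*} [Group G] (k : G) (S : Subgroup G) :
    Subgroup.centralizer ((S.map (MulAut.conj k).toMonoidHom : Subgroup G) : Set G) =
      (Subgroup.centralizer (S : Set G)).map (MulAut.conj k).toMonoidHom := by
  ext g
  simp only [Subgroup.mem_map_conj_iff, Subgroup.mem_centralizer_iff, SetLike.mem_coe]
  constructor
  · intro hg h hh
    have := hg (k * h * k⁻¹) (by simpa [mul_assoc] using hh)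
    calc h * (k⁻¹ * g * k) = k⁻¹ * (k * h * k⁻¹ * g) * k := by group
      _ = k⁻¹ * g * k * h := by rw [this]; group
  · intro hg h hh
    have := hg _ hh
    calc h * g = k * (k⁻¹ * h * k * (k⁻¹ * g * k)) * k⁻¹ := by group
      _ = g * h := by rw [this]; group

theorem Subgroup.card_centralizer_map_conj {G : Type*} [Group G] (k : G) (S : Subgroup G) :
    Nat.card (Subgroup.centralizer ((S.map (MulAut.conj k).toMonoidHom : Subgroup G) : Set G)) =
      Nat.card (Subgroup.centralizer (S : Set G)) := by
  rw [Subgroup.centralizer_map_conj, Subgroup.card_map_of_injective (MulAut.conj k).injective]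

theorem MonoidHom.conj_comp_eq_conj_comp_iff {M G : Type*} [Group M] [Group G]
    (f : M →* G) (k k₀ : G) :
    (MulAut.conj k).toMonoidHom.comp f = (MulAut.conj k₀).toMonoidHom.comp f ↔
      k₀⁻¹ * k ∈ Subgroup.centralizer ((f.range : Subgroup G) : Set G) := by
  simp only [MonoidHom.ext_iff, Subgroup.mem_centralizer_iff, SetLike.mem_coe,
    MonoidHom.mem_range, forall_exists_index, forall_apply_eq_imp_iff, MonoidHom.coe_comp,
    Function.comp_apply, MulEquiv.coe_toMonoidHom, MulAut.conj_apply]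
  refine forall_congr' fun m => ⟨fun h => ?_, fun h => ?_⟩
  · calc f m * (k₀⁻¹ * k) = k₀⁻¹ * (k₀ * f m * k₀⁻¹) * k := by group
      _ = k₀⁻¹ * k * f m := by rw [← h]; group
  · calc k * f m * k⁻¹ = k₀ * (k₀⁻¹ * k * f m) * k⁻¹ := by group
      _ = k₀ * f m * k₀⁻¹ := by rw [← h]; group

theorem finsum_eq_of_fibers_eq_leftCosets {G α R : Type*} [Group G] [Finite G] [Field R]
    [CharZero R] (F : α → R) (φ : G → α) (C : Subgroup G) (hφ : ∀ k k₀, φ k = φ k₀ ↔ k₀⁻¹ * k ∈ C)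
    (hF : ∀ p, F p ≠ 0 → ∃ k, φ k = p) (v : R)
    (hv : ∀ k, F (φ k) = Nat.card C / Nat.card G * v) : ∑ᶠ p, F p = v := by
  have := Fintype.ofFinite G
  have card_fiber : ∀ k₀, ({k | φ k = φ k₀} : Finset G).card = Nat.card C := fun k₀ => by
    rw [← Fintype.card_subtype, ← Nat.card_eq_fintype_card]
    exact Nat.card_congr ⟨fun k => ⟨k₀⁻¹ * k.1, (hφ _ _).mp k.2⟩,
      fun c => ⟨k₀ * c, (hφ _ _).mpr (by simp)⟩, fun k => by simp, fun c => by simp⟩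
  have sum_comp_eq : ∑ k, F (φ k) = Nat.card C * ∑ᶠ p, F p := by
    rw [Finset.sum_comp, finsum_eq_sum_of_support_subset F (s := Finset.univ.image φ),
      Finset.mul_sum]
    · refine Finset.sum_congr rfl fun p hp => ?_
      obtain ⟨k₀, -, rfl⟩ := Finset.mem_image.mp hp
      rw [card_fiber, nsmul_eq_mul]
    · intro p hp
      obtain ⟨k, rfl⟩ := hF p hp
      simp
  have sum_comp_val : ∑ k, F (φ k) = Nat.card C * v := by
    simp only [hv, Finset.sum_const, Finset.card_univ, nsmul_eq_mul, ← Nat.card_eq_fintype_card]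
    field_simp
  exact mul_left_cancel₀ (Nat.cast_ne_zero.mpr Nat.card_pos.ne')
    (sum_comp_eq.symm.trans sum_comp_val)

section Graph

variable {G H : Type*} [Group G] [Group H]

theorem mem_lhdOf {t : TriE G H} {g : G} {h : H} :
    (g, h) ∈ lhdOf t ↔ ∃ hh : h ∈ t.1, t.2 ⟨h, hh⟩ = g := by
  constructor
  · rintro ⟨v, hv⟩
    obtain ⟨rfl, rfl⟩ := Prod.ext_iff.mp hv
    exact ⟨v.2, rfl⟩
  · rintro ⟨hh, rfl⟩
    exact ⟨⟨h, hh⟩, rfl⟩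

theorem apply_mem_lhdOf (t : TriE G H) (v : t.1) : (t.2 v, (v : H)) ∈ lhdOf t :=
  mem_lhdOf.mpr ⟨v.2, rfl⟩

theorem fst_eq_of_mem_lhdOf {t : TriE G H} {g g' : G} {h : H} (hg : (g, h) ∈ lhdOf t)
    (hg' : (g', h) ∈ lhdOf t) : g = g' := by
  obtain ⟨_, rfl⟩ := mem_lhdOf.mp hg
  obtain ⟨_, rfl⟩ := mem_lhdOf.mp hg'
  rfl

theorem mem_range_of_mem_lhdOf {t : TriE G H} {g : G} {h : H} (hg : (g, h) ∈ lhdOf t) :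
    g ∈ t.2.range := by
  obtain ⟨hh, rfl⟩ := mem_lhdOf.mp hg
  exact ⟨_, rfl⟩

theorem lhdOf_injective : Function.Injective (lhdOf : TriE G H → Subgroup (G × H)) := by
  rintro ⟨V, f⟩ ⟨W, f'⟩ h
  obtain rfl : V = W := by
    ext v
    exact ⟨fun hv => (mem_lhdOf.mp (h ▸ apply_mem_lhdOf ⟨V, f⟩ ⟨v, hv⟩)).1,
      fun hv => (mem_lhdOf.mp (h ▸ apply_mem_lhdOf ⟨W, f'⟩ ⟨v, hv⟩)).1⟩
  congr
  ext v
  exact fst_eq_of_mem_lhdOf (apply_mem_lhdOf ⟨V, f⟩ v) (h ▸ apply_mem_lhdOf ⟨V, f'⟩ v)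

end Graph

namespace TriE

variable {G H K : Type*} [Group G] [Group H] [Group K]

def diag (V : Subgroup G) : TriE G G := ⟨V, V.subtype⟩

def postConj (k : G) (t : TriE G H) : TriE G H := ⟨t.1, (MulAut.conj k).toMonoidHom.comp t.2⟩

noncomputable def conj (x : G × H) (t : TriE G H) : TriE G H :=
  ⟨t.1.map (MulAut.conj x.2).toMonoidHom, ((MulAut.conj x.1).toMonoidHom.comp t.2).comp
    (t.1.equivMapOfInjective _ (MulAut.conj x.2).injective).symm.toMonoidHom⟩

@[simp]
theorem diag_fst (V : Subgroup G) : (diag V).1 = V := rfl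

@[simp]
theorem postConj_fst (k : G) (t : TriE G H) : (t.postConj k).1 = t.1 := rfl

@[simp]
theorem conj_fst (x : G × H) (t : TriE G H) :
    (t.conj x).1 = t.1.map (MulAut.conj x.2).toMonoidHom := rfl

theorem range_postConj (k : G) (t : TriE G H) :
    (t.postConj k).2.range = t.2.range.map (MulAut.conj k).toMonoidHom :=
  MonoidHom.range_comp _ _

theorem postConj_eq_postConj_iff (t : TriE G H) (k k₀ : G) :
    t.postConj k = t.postConj k₀ ↔
      k₀⁻¹ * k ∈ Subgroup.centralizer ((t.2.range : Subgroup G) : Set G) := by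
  rw [← MonoidHom.conj_comp_eq_conj_comp_iff, postConj, postConj, Sigma.mk.inj_iff]
  simp

end TriE

section Graph

variable {G H : Type*} [Group G] [Group H]

theorem mem_lhdOf_diag {V : Subgroup G} {g h : G} :
    (g, h) ∈ lhdOf (TriE.diag V) ↔ h ∈ V ∧ h = g := by
  simp [mem_lhdOf, TriE.diag]

theorem mem_lhdOf_postConj {k : G} {t : TriE G H} {g : G} {h : H} :
    (g, h) ∈ lhdOf (t.postConj k) ↔ (k⁻¹ * g * k, h) ∈ lhdOf t := by
  simp only [mem_lhdOf, TriE.postConj, MonoidHom.coe_comp, Function.comp_apply,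
    MulEquiv.coe_toMonoidHom, MulAut.conj_apply]
  exact exists_congr fun _ => ⟨fun e => by rw [← e]; group, fun e => by rw [e]; group⟩

theorem mem_lhdOf_conj {x : G × H} {t : TriE G H} {g : G} {h : H} :
    (g, h) ∈ lhdOf (t.conj x) ↔ (x.1⁻¹ * g * x.1, x.2⁻¹ * h * x.2) ∈ lhdOf t := by
  have hmem : h ∈ t.1.map (MulAut.conj x.2).toMonoidHom ↔ x.2⁻¹ * h * x.2 ∈ t.1 :=
    Subgroup.mem_map_conj_iff
  have hsymm : ∀ hh, (t.1.equivMapOfInjective _ (MulAut.conj x.2).injective).symm ⟨h, hh⟩ =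
      ⟨x.2⁻¹ * h * x.2, hmem.mp hh⟩ := fun hh => by
    rw [MulEquiv.symm_apply_eq]
    ext
    show h = x.2 * (x.2⁻¹ * h * x.2) * x.2⁻¹
    group
  simp only [mem_lhdOf, TriE.conj, MonoidHom.coe_comp, Function.comp_apply,
    MulEquiv.coe_toMonoidHom, MulAut.conj_apply]
  constructor
  · rintro ⟨hh, rfl⟩
    exact ⟨hmem.mp hh, by rw [hsymm]; group⟩
  · rintro ⟨hh, hg⟩
    exact ⟨hmem.mpr hh, by rw [hsymm, hg]; group⟩

theorem lhdOf_postConj (k : G) (t : TriE G H) :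
    lhdOf (t.postConj k) = (lhdOf t).map (MulAut.conj (k, (1 : H))).toMonoidHom := by
  ext ⟨g, h⟩
  rw [Subgroup.mem_map_conj_iff, mem_lhdOf_postConj]
  simp

theorem lhdOf_conj (x : G × H) (t : TriE G H) :
    lhdOf (t.conj x) = (lhdOf t).map (MulAut.conj x).toMonoidHom := by
  ext ⟨g, h⟩
  rw [Subgroup.mem_map_conj_iff, mem_lhdOf_conj]
  rfl

theorem map_conj_lhdOf_diag (U : Subgroup G) (x : G × G) :
    (lhdOf (TriE.diag U)).map (MulAut.conj x).toMonoidHom =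
      lhdOf ((TriE.diag (U.map (MulAut.conj x.2).toMonoidHom)).postConj (x.1 * x.2⁻¹)) := by
  ext ⟨g, h⟩
  rw [Subgroup.mem_map_conj_iff, mem_lhdOf_postConj, mem_lhdOf_diag, mem_lhdOf_diag,
    Subgroup.mem_map_conj_iff]
  refine and_congr_right fun _ => ?_
  show x.2⁻¹ * h * x.2 = x.1⁻¹ * g * x.1 ↔ _
  constructor
  · intro e
    calc h = x.2 * (x.2⁻¹ * h * x.2) * x.2⁻¹ := by group
      _ = (x.1 * x.2⁻¹)⁻¹ * g * (x.1 * x.2⁻¹) := by rw [e]; group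
  · rintro rfl
    group

end Graph

namespace TriE

variable {G H K : Type*} [Group G] [Group H] [Group K]

/-- `r = s ∘ t` in the sense of `ghostMul`, phrased through graphs (relational composition)
so that no cast along `t.2.range = s.1` is needed. -/
def Composes (s : TriE G H) (t : TriE H K) (r : TriE G K) : Prop :=
  t.2.range = s.1 ∧ ∀ g k, (g, k) ∈ lhdOf r ↔ ∃ h, (g, h) ∈ lhdOf s ∧ (h, k) ∈ lhdOf t

theorem Composes.fst_eq {s : TriE G H} {t : TriE H K} {r : TriE G K} (hc : Composes s t r) :
    r.1 = t.1 := by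
  ext k
  constructor
  · intro hk
    obtain ⟨h, -, hh⟩ := (hc.2 _ _).mp (apply_mem_lhdOf r ⟨k, hk⟩)
    exact (mem_lhdOf.mp hh).1
  · intro hk
    have hs : t.2 ⟨k, hk⟩ ∈ s.1 := hc.1 ▸ ⟨_, rfl⟩
    have := (hc.2 _ _).mpr ⟨_, apply_mem_lhdOf s ⟨_, hs⟩, apply_mem_lhdOf t ⟨k, hk⟩⟩
    exact (mem_lhdOf.mp this).1

theorem Composes.left_unique {s s' : TriE G H} {t : TriE H K} {r : TriE G K}
    (hc : Composes s t r) (hc' : Composes s' t r) : s = s' := by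
  suffices key : ∀ {s s'}, Composes s t r → Composes s' t r →
      ∀ g h, (g, h) ∈ lhdOf s → (g, h) ∈ lhdOf s' from
    lhdOf_injective (SetLike.ext fun ⟨g, h⟩ => ⟨key hc hc' g h, key hc' hc g h⟩)
  intro s s' hc hc' g h hgh
  obtain ⟨k, rfl⟩ : h ∈ t.2.range := hc.1 ▸ (mem_lhdOf.mp hgh).1
  obtain ⟨h', hgh', hh'k⟩ := (hc'.2 _ _).mp ((hc.2 _ _).mpr ⟨_, hgh, apply_mem_lhdOf t k⟩)
  rwa [fst_eq_of_mem_lhdOf (apply_mem_lhdOf t k) hh'k]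

theorem Composes.pair_eq_iff {s s' : TriE G H} {t t' : TriE H K} {r : TriE G K}
    (hc : Composes s t r) (hc' : Composes s' t' r) : (s, t) = (s', t') ↔ t = t' :=
  ⟨congrArg Prod.snd, fun h => by subst h; rw [hc.left_unique hc']⟩

end TriE

theorem ghostMul_apply {G H K : Type*} [Group G] [Group H] [Group K] [Finite G] [Finite H]
    [Finite K] (a : TriE G H → ℚ) (b : TriE H K → ℚ) (r : TriE G K) :
    ghostMul a b r = ∑ᶠ p : TriE G H × TriE H K, if TriE.Composes p.1 p.2 r then
      (Nat.card (Subgroup.centralizer (p.1.1 : Set H)) / Nat.card H : ℚ) * a p.1 * b p.2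
      else 0 := by
  rw [finsum_curry _ (Set.toFinite _)]
  refine finsum_congr fun s => finsum_congr fun t => ?_
  by_cases h : t.2.range = s.1
  · rw [dif_pos h]
    refine if_congr ?_ rfl rfl
    have graph_comp : ∀ g k, (g, k) ∈ lhdOf ⟨t.1, s.2.comp (t.2.codRestrict s.1
        (fun w => h ▸ MonoidHom.mem_range.mpr ⟨w, rfl⟩))⟩ ↔
          ∃ h, (g, h) ∈ lhdOf s ∧ (h, k) ∈ lhdOf t := by
      intro g k
      simp only [mem_lhdOf]
      constructor
      · rintro ⟨hk, rfl⟩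
        exact ⟨_, ⟨_, rfl⟩, hk, rfl⟩
      · rintro ⟨_, ⟨_, rfl⟩, hk, rfl⟩
        exact ⟨hk, rfl⟩
    rw [← lhdOf_injective.eq_iff, SetLike.ext_iff]
    simp only [TriE.Composes, h, true_and, Prod.forall, graph_comp]
  · rw [dif_neg h, if_neg (fun hc => h hc.1)]

section DiagUnit

variable {G : Type*} [Group G]

noncomputable def diagUnit (Sig : Finset (Subgroup G)) : TriE G G → ℚ :=
  fun s => ∑ U ∈ Sig, orbSum (TriE.diag U) s

theorem diagUnit_postConj_diag {Sig : Finset (Subgroup G)}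
    (hSig : ∀ V : Subgroup G, ∃! U, U ∈ Sig ∧
      ∃ g : G, Subgroup.map (MulAut.conj g).toMonoidHom U = V) (V : Subgroup G) (k : G) :
    diagUnit Sig ((TriE.diag V).postConj k) = 1 := by
  obtain ⟨U₀, ⟨hU₀, h, hh⟩, huniq⟩ := hSig V
  rw [diagUnit, Finset.sum_eq_single_of_mem U₀ hU₀]
  · rw [orbSum, if_pos ⟨(k * h, h), by rw [map_conj_lhdOf_diag, hh, mul_inv_cancel_right]⟩]
  · intro U hU hne
    rw [orbSum, if_neg]
    rintro ⟨x, hx⟩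
    rw [map_conj_lhdOf_diag] at hx
    exact hne (huniq U ⟨hU, x.2, congrArg Sigma.fst (lhdOf_injective hx)⟩)

theorem exists_eq_postConj_diag_of_diagUnit_ne_zero {Sig : Finset (Subgroup G)} {s : TriE G G}
    (hs : diagUnit Sig s ≠ 0) : ∃ V k, s = (TriE.diag V).postConj k := by
  obtain ⟨U, -, hU⟩ := Finset.exists_ne_zero_of_sum_ne_zero hs
  obtain ⟨x, hx⟩ :
      ∃ x : G × G, (lhdOf (TriE.diag U)).map (MulAut.conj x).toMonoidHom = lhdOf s := by
    by_contra h
    exact hU (if_neg h)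
  exact ⟨_, _, lhdOf_injective (hx.symm.trans (map_conj_lhdOf_diag U x))⟩

end DiagUnit

namespace TriE

variable {G H K : Type*} [Group G] [Group H] [Group K]

theorem composes_postConj_diag_postConj (r : TriE G K) (k : G) :
    Composes ((diag (r.postConj k).2.range).postConj k⁻¹) (r.postConj k) r := by
  refine ⟨rfl, fun g w => ?_⟩
  simp only [mem_lhdOf_postConj, mem_lhdOf_diag, inv_inv]
  constructor
  · intro hgw
    have hk : (k * g * k⁻¹, w) ∈ lhdOf (r.postConj k) :=
      mem_lhdOf_postConj.mpr (by group; exact hgw)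
    exact ⟨_, ⟨mem_range_of_mem_lhdOf hk, rfl⟩, mem_lhdOf_postConj.mp hk⟩
  · rintro ⟨h, ⟨-, rfl⟩, hh⟩
    group at hh
    exact hh

theorem Composes.eq_postConj_of_postConj_diag {V : Subgroup G} {k : G} {t r : TriE G K}
    (hc : Composes ((diag V).postConj k) t r) : t = r.postConj k⁻¹ := by
  have hV : t.2.range = V := hc.1
  refine lhdOf_injective (SetLike.ext fun ⟨g, w⟩ => ?_)
  rw [mem_lhdOf_postConj, inv_inv, hc.2]
  simp only [mem_lhdOf_postConj, mem_lhdOf_diag]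
  constructor
  · intro hgw
    exact ⟨g, ⟨hV ▸ mem_range_of_mem_lhdOf hgw, by group⟩, hgw⟩
  · rintro ⟨h, ⟨-, rfl⟩, hh⟩
    group at hh
    exact hh

theorem composes_conj_postConj_diag (r : TriE H G) (k : G) :
    Composes (r.conj (1, k)) ((diag r.1).postConj k) r := by
  refine ⟨by rw [range_postConj, conj_fst, diag, Subgroup.range_subtype], fun h w => ?_⟩
  simp only [mem_lhdOf_conj, mem_lhdOf_postConj, mem_lhdOf_diag, inv_one, one_mul, mul_one]
  constructor
  · intro hhw
    exact ⟨k * w * k⁻¹, by group; exact hhw, (mem_lhdOf.mp hhw).1, by group⟩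
  · rintro ⟨g, hg, -, rfl⟩
    exact hg

end TriE

section Unit

variable {G H : Type*} [Group G] [Group H] [Finite G] [Finite H] {Sig : Finset (Subgroup G)}

theorem diagUnit_ghostMul
    (hSig : ∀ V : Subgroup G, ∃! U, U ∈ Sig ∧
      ∃ g : G, Subgroup.map (MulAut.conj g).toMonoidHom U = V)
    (a : TriE G H → ℚ)
    (ha : ∀ (x : G × H) (r r' : TriE G H),
      Subgroup.map (MulAut.conj x).toMonoidHom (lhdOf r) = lhdOf r' → a r = a r')
    (r : TriE G H) : ghostMul (diagUnit Sig) a r = a r := by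
  rw [ghostMul_apply]
  refine finsum_eq_of_fibers_eq_leftCosets _
    (fun k => ((TriE.diag (r.postConj k).2.range).postConj k⁻¹, r.postConj k))
    (Subgroup.centralizer (r.2.range : Set G)) (fun k k₀ => ?_) (fun p hp => ?_) _ (fun k => ?_)
  · rw [(TriE.composes_postConj_diag_postConj r k).pair_eq_iff
      (TriE.composes_postConj_diag_postConj r k₀)]
    exact r.postConj_eq_postConj_iff k k₀
  · obtain ⟨hc, he⟩ := ite_ne_right_iff.mp hp
    obtain ⟨V, k, hs⟩ := exists_eq_postConj_diag_of_diagUnit_ne_zero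
      (right_ne_zero_of_mul (left_ne_zero_of_mul he))
    have ht := (hs ▸ hc).eq_postConj_of_postConj_diag
    exact ⟨k⁻¹, Prod.ext ((TriE.composes_postConj_diag_postConj r k⁻¹).left_unique (ht ▸ hc))
      ht.symm⟩
  · dsimp only
    rw [if_pos (TriE.composes_postConj_diag_postConj r k), diagUnit_postConj_diag hSig,
      ← ha (k, 1) r _ (lhdOf_postConj k r).symm, mul_one, TriE.postConj_fst, TriE.diag_fst,
      TriE.range_postConj, Subgroup.card_centralizer_map_conj]

theorem ghostMul_diagUnit
    (hSig : ∀ V : Subgroup G, ∃! U, U ∈ Sig ∧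
      ∃ g : G, Subgroup.map (MulAut.conj g).toMonoidHom U = V)
    (a : TriE H G → ℚ)
    (ha : ∀ (x : H × G) (r r' : TriE H G),
      Subgroup.map (MulAut.conj x).toMonoidHom (lhdOf r) = lhdOf r' → a r = a r')
    (r : TriE H G) : ghostMul a (diagUnit Sig) r = a r := by
  rw [ghostMul_apply]
  refine finsum_eq_of_fibers_eq_leftCosets _
    (fun k => (r.conj (1, k), (TriE.diag r.1).postConj k))
    (Subgroup.centralizer (r.1 : Set G)) (fun k k₀ => ?_) (fun p hp => ?_) _ (fun k => ?_)
  · rw [(TriE.composes_conj_postConj_diag r k).pair_eq_iff (TriE.composes_conj_postConj_diag r k₀),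
      TriE.postConj_eq_postConj_iff, TriE.diag, Subgroup.range_subtype]
  · obtain ⟨hc, he⟩ := ite_ne_right_iff.mp hp
    obtain ⟨V, k, ht⟩ := exists_eq_postConj_diag_of_diagUnit_ne_zero (right_ne_zero_of_mul he)
    rw [ht] at hc
    obtain rfl : r.1 = V := hc.fst_eq
    exact ⟨k, Prod.ext ((TriE.composes_conj_postConj_diag r k).left_unique hc) ht.symm⟩
  · dsimp only
    rw [if_pos (TriE.composes_conj_postConj_diag r k), diagUnit_postConj_diag hSig,
      ← ha (1, k) r _ (lhdOf_conj (1, k) r).symm, mul_one, TriE.conj_fst,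
      Subgroup.card_centralizer_map_conj]

end Unit

/-- the orbit sums of the triples `(U, id_U, U)`, for `U` running
through a transversal of the conjugacy classes of subgroups of `G`, add up to a
two-sided identity element for the ghost product on the `G × G`-fixed elements
of `ℚA(G,G)`.  (In particular the `ℤ`-span `B̃(G,G)` of the orbit sums is a ring
— a `ℤ`-order in `ℚA(G,G)^{G×G}` — with this identity element.) -/
theorem stmt10 {G : Type*} [Group G] [Finite G] (Sig : Finset (Subgroup G))
    (hSig : ∀ V : Subgroup G, ∃! U, U ∈ Sig ∧
      ∃ g : G, Subgroup.map (MulAut.conj g).toMonoidHom U = V)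
    (a : TriE G G → ℚ)
    (ha : ∀ (x : G × G) (r r' : TriE G G),
      Subgroup.map (MulAut.conj x).toMonoidHom (lhdOf r) = lhdOf r' → a r = a r') :
    ghostMul (fun r => ∑ U ∈ Sig, orbSum (⟨U, U.subtype⟩ : TriE G G) r) a = a ∧
    ghostMul a (fun r => ∑ U ∈ Sig, orbSum (⟨U, U.subtype⟩ : TriE G G) r) = a :=
  ⟨funext (diagUnit_ghostMul hSig a ha), funext (ghostMul_diagUnit hSig a ha)⟩
end

section
/- Let p be a prime, S a finite p-group, and 𝒻 a fusion system on S such that |S| / (|Hom_𝒻(Q,S)| · |C_S(Q)|) ∈ ℤ_(p) for every Q ≤ S. Then a subgroup P ≤ S is fully 𝒻-normalized if and only if P is fully 𝒻-centralized and Aut_S(P) is a Sylow p-subgroup of Aut_𝒻(P). -/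
/-- A fusion system on a group `S` (morphisms `P → Q` are encoded as injective
homomorphisms `↥P →* S` with range contained in `Q`). -/
structure FusionSystem (S : Type*) [Group S] where
  Hom : ∀ (P : Subgroup S), Subgroup S → Set (↥P →* S)
  range_le : ∀ {P Q : Subgroup S} {φ : ↥P →* S}, φ ∈ Hom P Q → φ.range ≤ Q
  injective : ∀ {P Q : Subgroup S} {φ : ↥P →* S}, φ ∈ Hom P Q → Function.Injective φ
  conj_mem : ∀ (P Q : Subgroup S) (s : S) (φ : ↥P →* S),
    (∀ p : ↥P, φ p = s * p * s⁻¹) → φ.range ≤ Q → φ ∈ Hom P Q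
  comp_mem : ∀ {P Q R : Subgroup S} {φ : ↥P →* S} {ψ : ↥Q →* S} (χ : ↥P →* S),
    φ ∈ Hom P Q → ψ ∈ Hom Q R →
    (∀ (x : ↥P) (y : ↥Q), (y : S) = φ x → χ x = ψ y) → χ ∈ Hom P R
  isoOnto_mem : ∀ {P Q : Subgroup S} {φ : ↥P →* S}, φ ∈ Hom P Q → φ ∈ Hom P φ.range
  inv_mem : ∀ {P Q : Subgroup S} {φ : ↥P →* S}, φ ∈ Hom P Q →
    ∀ ψ : ↥φ.range →* S, (∀ (x : ↥P) (y : ↥φ.range), (y : S) = φ x → ψ y = x) →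
      ψ ∈ Hom φ.range P

/-- `P` and `Q` are `𝒻`-isomorphic. -/
def FIso {S : Type*} [Group S] (𝒻 : FusionSystem S) (P Q : Subgroup S) : Prop :=
  ∃ φ : ↥P →* S, φ ∈ 𝒻.Hom P Q ∧ φ.range = Q

/-- `P` is fully `𝒻`-normalized. -/
def FullyNormalized {S : Type*} [Group S] (𝒻 : FusionSystem S) (P : Subgroup S) : Prop :=
  ∀ Q : Subgroup S, FIso 𝒻 P Q → Nat.card ↥(Subgroup.normalizer (Q : Set S)) ≤ Nat.card ↥(Subgroup.normalizer (P : Set S))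

/-- `P` is fully `𝒻`-centralized. -/
def FullyCentralized {S : Type*} [Group S] (𝒻 : FusionSystem S) (P : Subgroup S) : Prop :=
  ∀ Q : Subgroup S, FIso 𝒻 P Q →
    Nat.card ↥(Subgroup.centralizer (Q : Set S)) ≤ Nat.card ↥(Subgroup.centralizer (P : Set S))

/-!
Let `S × Aut_𝒻(P)` act on `Hom_𝒻(P, S)` by `(s, α) • φ = c_s ∘ φ ∘ α⁻¹`. The stabilizer of `φ`
embeds into `N_S(φ(P))`, so when `P` is fully normalized every orbit, hence `Hom_𝒻(P, S)` itself,
has order divisible by `|S| |Aut_𝒻(P)| / |N_S(P)|`. Since `|N_S(P)| = |Aut_S(P)| |C_S(P)|` with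
`Aut_S(P) ≤ Aut_𝒻(P)`, comparing `p`-parts with the hypothesis on `|Hom_𝒻(Q, S)| |C_S(Q)|`
forces `|Aut_𝒻(P)|_p = |Aut_S(P)|` and `|C_S(Q)| ≤ |C_S(P)|` for all `Q ≅ P`. Conversely, for
`Q ≅ P` one has `|N_S(Q)| ≤ |Aut_𝒻(Q)|_p |C_S(Q)| ≤ |Aut_𝒻(P)|_p |C_S(P)|`, which equals
`|N_S(P)|` when `P` is fully centralized and `Aut_S(P)` is Sylow.
-/

theorem Nat.exists_not_dvd_mul_eq_iff {p x n : ℕ} (hp : p.Prime) (hx : x ≠ 0)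
    (hn : ∃ k, n = p ^ k) :
    (∃ m, ¬ p ∣ m ∧ x = m * n) ↔ x.factorization p = n.factorization p := by
  obtain ⟨k, rfl⟩ := hn
  rw [hp.factorization_pow, Finsupp.single_eq_same]
  constructor
  · rintro ⟨m, hm, rfl⟩
    rw [Nat.factorization_mul (left_ne_zero_of_mul hx) (right_ne_zero_of_mul hx),
      Finsupp.add_apply, Nat.factorization_eq_zero_of_not_dvd hm, zero_add, hp.factorization_pow,
      Finsupp.single_eq_same]
  · intro h
    refine ⟨ordCompl[p] x, Nat.not_dvd_ordCompl hp hx, ?_⟩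
    rw [← h, mul_comm, Nat.ordProj_mul_ordCompl_eq_self]

namespace IsPGroup

variable {p : ℕ} [Fact p.Prime] {G H : Type*} [Group G] [Group H] [Finite G] [Finite H]

theorem card_le_card_iff (hG : IsPGroup p G) (hH : IsPGroup p H) :
    Nat.card G ≤ Nat.card H ↔ (Nat.card G).factorization p ≤ (Nat.card H).factorization p := by
  obtain ⟨k, hk⟩ := iff_card.mp hG
  obtain ⟨l, hl⟩ := iff_card.mp hH
  have hp : p.Prime := Fact.out
  simp [hk, hl, Nat.pow_le_pow_iff_right hp.one_lt, hp.factorization_self]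

theorem card_dvd_card_of_card_le (hG : IsPGroup p G) (hH : IsPGroup p H)
    (h : Nat.card G ≤ Nat.card H) : Nat.card G ∣ Nat.card H := by
  obtain ⟨k, hk⟩ := iff_card.mp hG
  obtain ⟨l, hl⟩ := iff_card.mp hH
  rw [hk, hl] at h ⊢
  exact pow_dvd_pow p ((Nat.pow_le_pow_iff_right (Fact.out : p.Prime).one_lt).mp h)

end IsPGroup

theorem MulAction.card_dvd_mul_card_of_card_stabilizer_dvd {G X : Type*} [Group G]
    [MulAction G X] [Finite G] [Finite X] {n : ℕ} (h : ∀ x : X, Nat.card (stabilizer G x) ∣ n) :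
    Nat.card G ∣ n * Nat.card X := by
  classical
  have : Fintype (orbitRel.Quotient G X) := Fintype.ofFinite _
  rw [Nat.card_congr (selfEquivSigmaOrbits G X), Nat.card_sigma, Finset.mul_sum]
  refine Finset.dvd_sum fun ω _ => ?_
  rw [← (stabilizer G ω.out).card_mul_index, index_stabilizer, ← Nat.card_coe_set_eq]
  exact mul_dvd_mul_right (h _) _

theorem Subgroup.card_range_normalizerMonoidHom_mul_card_centralizer {G : Type*} [Group G]
    (H : Subgroup G) :
    Nat.card H.normalizerMonoidHom.range * Nat.card (centralizer (H : Set G)) =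
      Nat.card (normalizer (H : Set G)) := by
  rw [← H.normalizerMonoidHom.ker.card_mul_index, index_ker, mul_comm, normalizerMonoidHom_ker,
    Nat.card_congr (subgroupOfEquivOfLe (centralizer_le_normalizer _)).toEquiv]

instance MonoidHom.finite {M N : Type*} [MulOneClass M] [MulOneClass N] [Finite M] [Finite N] :
    Finite (M →* N) :=
  .of_injective _ DFunLike.coe_injective

namespace FusionSystem

variable {S : Type*} [Group S] (𝒻 : FusionSystem S) {P Q R : Subgroup S}

/-- The morphisms of `𝒻` with their codomain restricted, so that they compose as ordinary
homomorphisms. -/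
def Mor (P Q : Subgroup S) : Set (P →* Q) :=
  {f | Q.subtype.comp f ∈ 𝒻.Hom P Q}

theorem codRestrict_mem_mor {φ : P →* S} (hφ : φ ∈ 𝒻.Hom P Q) :
    φ.codRestrict Q (fun x => 𝒻.range_le hφ ⟨x, rfl⟩) ∈ 𝒻.Mor P Q :=
  hφ

def homEquivMor (P Q : Subgroup S) : 𝒻.Hom P Q ≃ 𝒻.Mor P Q where
  toFun φ := ⟨_, 𝒻.codRestrict_mem_mor φ.2⟩
  invFun f := ⟨_, f.2⟩
  left_inv _ := rfl
  right_inv _ := rfl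

theorem comp_mem_hom {f : P →* Q} (hf : f ∈ 𝒻.Mor P Q) {ψ : Q →* S} (hψ : ψ ∈ 𝒻.Hom Q R) :
    ψ.comp f ∈ 𝒻.Hom P R :=
  𝒻.comp_mem _ hf hψ fun _ _ hxy => congrArg ψ (Subtype.ext hxy).symm

theorem comp_mem_mor {f : P →* Q} {g : Q →* R} (hf : f ∈ 𝒻.Mor P Q) (hg : g ∈ 𝒻.Mor Q R) :
    g.comp f ∈ 𝒻.Mor P R :=
  𝒻.comp_mem_hom hf hg

theorem subtype_mem_hom (h : P ≤ Q) : P.subtype ∈ 𝒻.Hom P Q :=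
  𝒻.conj_mem P Q 1 _ (fun _ => by simp) (by simpa using h)

theorem id_mem_mor : MonoidHom.id P ∈ 𝒻.Mor P P :=
  𝒻.subtype_mem_hom le_rfl

theorem conj_comp_mem_hom (s : S) {φ : P →* S} (hφ : φ ∈ 𝒻.Hom P ⊤) :
    (MulAut.conj s).toMonoidHom.comp φ ∈ 𝒻.Hom P ⊤ :=
  𝒻.comp_mem_hom (ψ := (MulAut.conj s).toMonoidHom.comp (⊤ : Subgroup S).subtype)
    (𝒻.codRestrict_mem_mor hφ) (𝒻.conj_mem ⊤ ⊤ s _ (fun _ => rfl) le_top)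

theorem _root_.FIso.exists_mulEquiv (h : FIso 𝒻 P Q) :
    ∃ e : P ≃* Q, e.toMonoidHom ∈ 𝒻.Mor P Q ∧ e.symm.toMonoidHom ∈ 𝒻.Mor Q P := by
  obtain ⟨φ, hφ, rfl⟩ := h
  refine ⟨MonoidHom.ofInjective (𝒻.injective hφ), hφ, 𝒻.inv_mem hφ _ fun x y hxy => ?_⟩
  obtain rfl : y = MonoidHom.ofInjective (𝒻.injective hφ) x := Subtype.ext hxy
  simp

theorem _root_.FIso.card_hom_left (h : FIso 𝒻 P Q) (R : Subgroup S) :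
    Nat.card (𝒻.Hom Q R) = Nat.card (𝒻.Hom P R) := by
  obtain ⟨e, he, he'⟩ := h.exists_mulEquiv
  rw [Nat.card_congr (𝒻.homEquivMor Q R), Nat.card_congr (𝒻.homEquivMor P R)]
  exact Nat.card_congr
    { toFun f := ⟨f.1.comp e.toMonoidHom, 𝒻.comp_mem_mor he f.2⟩
      invFun f := ⟨f.1.comp e.symm.toMonoidHom, 𝒻.comp_mem_mor he' f.2⟩
      left_inv f := by ext; simp
      right_inv f := by ext; simp }

theorem _root_.FIso.card_hom_right (h : FIso 𝒻 P Q) (R : Subgroup S) :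
    Nat.card (𝒻.Hom R Q) = Nat.card (𝒻.Hom R P) := by
  obtain ⟨e, he, he'⟩ := h.exists_mulEquiv
  rw [Nat.card_congr (𝒻.homEquivMor R Q), Nat.card_congr (𝒻.homEquivMor R P)]
  exact Nat.card_congr
    { toFun f := ⟨e.symm.toMonoidHom.comp f.1, 𝒻.comp_mem_mor f.2 he'⟩
      invFun f := ⟨e.toMonoidHom.comp f.1, 𝒻.comp_mem_mor f.2 he⟩
      left_inv f := by ext; simp
      right_inv f := by ext; simp }

theorem _root_.FIso.card_hom_self (h : FIso 𝒻 P Q) :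
    Nat.card (𝒻.Hom Q Q) = Nat.card (𝒻.Hom P P) := by
  rw [h.card_hom_left, h.card_hom_right]

section Finite

variable [Finite S] (P)

def autF : Subgroup (MulAut P) where
  carrier := {f | f.toMonoidHom ∈ 𝒻.Mor P P}
  one_mem' := 𝒻.id_mem_mor
  mul_mem' hf hg := 𝒻.comp_mem_mor hg hf
  -- `f⁻¹` is a power of `f` in the finite group `MulAut P`.
  inv_mem' {f} hf := by
    obtain ⟨k, hk : f ^ k = f⁻¹⟩ := (isOfFinOrder_of_finite f).mem_powers_iff_mem_zpowers.mpr
      (Subgroup.inv_mem _ (Subgroup.mem_zpowers f))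
    rw [← hk]
    clear hk
    induction k with
    | zero => exact 𝒻.id_mem_mor
    | succ k ih => rw [pow_succ]; exact 𝒻.comp_mem_mor hf ih

theorem card_autF : Nat.card (𝒻.autF P) = Nat.card (𝒻.Hom P P) := by
  rw [Nat.card_congr (𝒻.homEquivMor P P)]
  refine Nat.card_congr (Equiv.ofBijective (fun f => ⟨f.1.toMonoidHom, f.2⟩) ⟨?_, ?_⟩)
  · exact fun f g hfg => Subtype.ext (MulEquiv.toMonoidHom_injective (congrArg Subtype.val hfg))
  · intro f
    have hinj : Function.Injective f.1 := fun x y hxy => 𝒻.injective f.2 (congrArg Subtype.val hxy)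
    exact ⟨⟨MulEquiv.ofBijective f.1 hinj.bijective_of_finite, f.2⟩, rfl⟩

theorem range_normalizerMonoidHom_le_autF :
    P.normalizerMonoidHom.range ≤ 𝒻.autF P := by
  rintro _ ⟨n, rfl⟩
  exact 𝒻.conj_mem P P n _ (fun _ => rfl) fun _ ⟨y, hy⟩ => hy ▸ (P.normalizerMonoidHom n y).2

theorem card_range_normalizerMonoidHom_dvd :
    Nat.card P.normalizerMonoidHom.range ∣ Nat.card (𝒻.Hom P P) :=
  𝒻.card_autF P ▸ Subgroup.card_dvd_of_le (𝒻.range_normalizerMonoidHom_le_autF P)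

instance : MulAction (S × 𝒻.autF P) (𝒻.Hom P ⊤) where
  smul g φ := ⟨(MulAut.conj g.1).toMonoidHom.comp (φ.1.comp (g.2⁻¹ : MulAut P).toMonoidHom),
    𝒻.conj_comp_mem_hom g.1 (𝒻.comp_mem_hom (g.2⁻¹).2 φ.2)⟩
  one_smul φ := by ext; simp [HSMul.hSMul]
  mul_smul g h φ := by ext; simp [HSMul.hSMul, mul_assoc]

theorem card_stabilizer_dvd_card_normalizer (φ : 𝒻.Hom P ⊤) :
    Nat.card (MulAction.stabilizer (S × 𝒻.autF P) φ) ∣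
      Nat.card (Subgroup.normalizer (φ.1.range : Set S)) := by
  have hfix (g : MulAction.stabilizer (S × 𝒻.autF P) φ) (x : P) :
      g.1.1 * φ.1 ((g.1.2⁻¹ : MulAut P) x) * g.1.1⁻¹ = φ.1 x :=
    congrArg (fun ψ : 𝒻.Hom P ⊤ => ψ.1 x) g.2
  have hnorm (g : MulAction.stabilizer (S × 𝒻.autF P) φ) :
      g.1.1 ∈ Subgroup.normalizer (φ.1.range : Set S) := by
    refine Subgroup.mem_normalizer_fintype fun _ ⟨y, hy⟩ => ⟨(g.1.2 : MulAut P) y, ?_⟩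
    simpa [← hy] using (hfix g ((g.1.2 : MulAut P) y)).symm
  refine Subgroup.card_dvd_of_injective
    { toFun g := ⟨g.1.1, hnorm g⟩, map_one' := rfl, map_mul' _ _ := rfl } fun g g' hgg' => ?_
  have hs : g.1.1 = g'.1.1 := congrArg Subtype.val hgg'
  have hα : (g.1.2⁻¹ : MulAut P) = g'.1.2⁻¹ := MulEquiv.ext fun x => 𝒻.injective φ.2 <| by
    have := (hfix g x).trans (hfix g' x).symm
    rwa [hs, mul_left_inj, mul_right_inj] at this
  exact Subtype.ext (Prod.ext hs (inv_injective (Subtype.ext hα)))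

theorem card_hom_pos (h : P ≤ Q) : 0 < Nat.card (𝒻.Hom P Q) :=
  have : Nonempty (𝒻.Hom P Q) := ⟨⟨_, 𝒻.subtype_mem_hom h⟩⟩
  Nat.card_pos

theorem factorization_card_normalizer_le (p : ℕ) :
    (Nat.card (Subgroup.normalizer (P : Set S))).factorization p ≤
      (Nat.card (𝒻.Hom P P)).factorization p +
        (Nat.card (Subgroup.centralizer (P : Set S))).factorization p := by
  have hdvd : Nat.card (Subgroup.normalizer (P : Set S)) ∣
      Nat.card (𝒻.Hom P P) * Nat.card (Subgroup.centralizer (P : Set S)) := by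
    rw [← P.card_range_normalizerMonoidHom_mul_card_centralizer]
    exact mul_dvd_mul_right (𝒻.card_range_normalizerMonoidHom_dvd P) _
  have ha := (𝒻.card_hom_pos P le_rfl).ne'
  have hc : Nat.card (Subgroup.centralizer (P : Set S)) ≠ 0 := Nat.card_pos.ne'
  simpa only [Nat.factorization_mul ha hc, Finsupp.add_apply] using
    (Nat.factorization_le_iff_dvd Nat.card_pos.ne' (mul_ne_zero ha hc)).mpr hdvd p

theorem _root_.FullyNormalized.factorization_card_add_le {p : ℕ} [Fact p.Prime]
    (hS : IsPGroup p S) (hP : FullyNormalized 𝒻 P) :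
    (Nat.card S).factorization p + (Nat.card (𝒻.Hom P P)).factorization p ≤
      (Nat.card (Subgroup.normalizer (P : Set S))).factorization p +
        (Nat.card (𝒻.Hom P ⊤)).factorization p := by
  have hdvd : Nat.card S * Nat.card (𝒻.Hom P P) ∣
      Nat.card (Subgroup.normalizer (P : Set S)) * Nat.card (𝒻.Hom P ⊤) := by
    rw [← 𝒻.card_autF, ← Nat.card_prod]
    refine MulAction.card_dvd_mul_card_of_card_stabilizer_dvd fun φ => ?_
    exact (𝒻.card_stabilizer_dvd_card_normalizer P φ).trans <|
      (hS.to_subgroup _).card_dvd_card_of_card_le (hS.to_subgroup _)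
        (hP _ ⟨φ.1, 𝒻.isoOnto_mem φ.2, rfl⟩)
  have ha := (𝒻.card_hom_pos P le_rfl).ne'
  have hn : Nat.card (Subgroup.normalizer (P : Set S)) ≠ 0 := Nat.card_pos.ne'
  have hh := (𝒻.card_hom_pos P le_top).ne'
  simpa only [Nat.factorization_mul Nat.card_pos.ne' ha, Nat.factorization_mul hn hh,
    Finsupp.add_apply] using
    (Nat.factorization_le_iff_dvd (mul_ne_zero Nat.card_pos.ne' ha) (mul_ne_zero hn hh)).mpr hdvd p

end Finite

end FusionSystem

/-- if `𝒻` is a fusion system on a finite `p`-group `S` with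
`|S| / (|Hom_𝒻(Q,S)|·|C_S(Q)|) ∈ ℤ_(p)` for every `Q ≤ S` (equivalently: the
`p`-part of `|Hom_𝒻(Q,S)|·|C_S(Q)|` divides `|S|`), then `P ≤ S` is fully
`𝒻`-normalized iff `P` is fully `𝒻`-centralized and `Aut_S(P)` is a Sylow
`p`-subgroup of `Aut_𝒻(P)`.  The Sylow condition is stated numerically: the
index `[Aut_𝒻(P) : Aut_S(P)] = m` is prime to `p`, i.e.
`|Aut_𝒻(P)|·|C_S(P)| = m·|N_S(P)|` with `p ∤ m`, using
`Aut_𝒻(P) = Hom_𝒻(P,P)` and `|Aut_S(P)| = |N_S(P)|/|C_S(P)|`. -/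
theorem stmt17 {p : ℕ} (hp : p.Prime) {S : Type*} [Group S] [Finite S]
    (hS : IsPGroup p S) (𝒻 : FusionSystem S)
    (hcond : ∀ Q : Subgroup S,
      p ^ ((Nat.card (𝒻.Hom Q ⊤) *
          Nat.card (Subgroup.centralizer (Q : Set S))).factorization p) ∣
        Nat.card S)
    (P : Subgroup S) :
    FullyNormalized 𝒻 P ↔
      (FullyCentralized 𝒻 P ∧ ∃ m : ℕ, ¬ p ∣ m ∧
        Nat.card (𝒻.Hom P P) * Nat.card (Subgroup.centralizer (P : Set S)) =
          m * Nat.card ↥(Subgroup.normalizer (P : Set S))) := by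
  have : Fact p.Prime := ⟨hp⟩
  have hc (Q : Subgroup S) : Nat.card (Subgroup.centralizer (Q : Set S)) ≠ 0 := Nat.card_pos.ne'
  have hcond_le (Q : Subgroup S) : (Nat.card (𝒻.Hom Q ⊤)).factorization p +
      (Nat.card (Subgroup.centralizer (Q : Set S))).factorization p ≤
        (Nat.card S).factorization p := by
    rw [← Finsupp.add_apply, ← Nat.factorization_mul (𝒻.card_hom_pos Q le_top).ne' (hc Q)]
    exact (hp.pow_dvd_iff_le_factorization Nat.card_pos.ne').mp (hcond Q)
  have hcard {Q R : Subgroup S} := (hS.to_subgroup Q).card_le_card_iff (hS.to_subgroup R)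
  have ha := (𝒻.card_hom_pos P le_rfl).ne'
  rw [Nat.exists_not_dvd_mul_eq_iff hp (mul_ne_zero ha (hc P))
    (IsPGroup.iff_card.mp (hS.to_subgroup _)), Nat.factorization_mul ha (hc P), Finsupp.add_apply]
  constructor
  · intro hN
    have horbit := hN.factorization_card_add_le 𝒻 P hS
    have hnormP := 𝒻.factorization_card_normalizer_le P p
    have hcondP := hcond_le P
    refine ⟨fun Q hQ => hcard.mpr ?_, by omega⟩
    have hcondQ := hcond_le Q
    rw [hQ.card_hom_left] at hcondQ
    omega
  · rintro ⟨hC, hsyl⟩ Q hQ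
    have hnormQ := 𝒻.factorization_card_normalizer_le Q p
    have hcentQ := hcard.mp (hC Q hQ)
    rw [hQ.card_hom_self] at hnormQ
    exact hcard.mpr (by omega)
end
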